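/- arXiv:1912.00301 — 2 statements merged into one kernel-verified Lean document; each statement's English description precedes it below -/
import Mathlib

section
/- Let E be a compact subset of ℝ² with Hausdorff dimension d > 0, and let (d_n) be a sequence of positive reals strictly increasing to d. Then there exists a point p ∈ E and a sequence of nested open squares S_{n+1} ⊆ S_n centered at p such that for every n, the annulus R_n = S_n \ S_{n+1} satisfies ℋ^{d_n}(R_n ∩ E) > 0. -/
open MeasureTheory Filter
open scoped ENNReal NNReal

/-- An open square centered at `p` with "radius" `r` (half the side length). -/
def openSquare (p : ℝ × ℝ) (r : ℝ) : Set (ℝ × ℝ) :=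
  {x | |x.1 - p.1| < r ∧ |x.2 - p.2| < r}

/-- Given a compact planar set of Hausdorff dimension `d > 0` and a sequence `dn`
strictly increasing to `d`, there are nested concentric open squares whose successive
annuli meet `E` in positive `dn`-dimensional Hausdorff measure. -/
theorem exists_nested_squares_annuli
    (E : Set (ℝ × ℝ)) (hE : IsCompact E) (d : ℝ) (hd0 : 0 < d)
    (hdim : dimH E = ENNReal.ofReal d)
    (dn : ℕ → ℝ) (hpos : ∀ n, 0 < dn n) (hmono : StrictMono dn)
    (hlt : ∀ n, dn n < d) (hlim : Tendsto dn atTop (nhds d)) :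
    ∃ p ∈ E, ∃ r : ℕ → ℝ, (∀ n, 0 < r n) ∧
      (∀ n, openSquare p (r (n + 1)) ⊆ openSquare p (r n)) ∧
      ∀ n, 0 < μH[dn n] ((openSquare p (r n) \ openSquare p (r (n + 1))) ∩ E) := by
  have hsq : ∀ (p : ℝ × ℝ) (r : ℝ), openSquare p r = Metric.ball p r := by
    intro p r; ext x
    simp [openSquare, Prod.dist_eq, Real.dist_eq, max_lt_iff]
  -- Step 1: find a point where E has full local dimension
  have hp : ∃ p ∈ E, ∀ r : ℝ, 0 < r → ENNReal.ofReal d ≤ dimH (Metric.ball p r ∩ E) := by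
    by_contra h
    push_neg at h
    choose! ρ hρ hρd using h
    obtain ⟨t, htE, hcover⟩ := hE.elim_nhds_subcover (fun x => Metric.ball x (ρ x))
      (fun x hx => Metric.ball_mem_nhds x (hρ x hx))
    have h1 : dimH E ≤ ⨆ x ∈ (t : Set (ℝ × ℝ)), dimH (Metric.ball x (ρ x) ∩ E) := by
      calc dimH E ≤ dimH (⋃ x ∈ (t : Set (ℝ × ℝ)), Metric.ball x (ρ x) ∩ E) := by
            apply dimH_mono
            intro y hy
            obtain ⟨x, hx, hyx⟩ := Set.mem_iUnion₂.1 (hcover hy)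
            exact Set.mem_iUnion₂.2 ⟨x, hx, hyx, hy⟩
        _ = _ := dimH_bUnion t.countable_toSet _
    have h2 : (⨆ x ∈ (t : Set (ℝ × ℝ)), dimH (Metric.ball x (ρ x) ∩ E))
        = t.sup (fun x => dimH (Metric.ball x (ρ x) ∩ E)) := by
      rw [Finset.sup_eq_iSup]; simp
    have h3 : t.sup (fun x => dimH (Metric.ball x (ρ x) ∩ E)) < ENNReal.ofReal d := by
      rw [Finset.sup_lt_iff (by simp [ENNReal.ofReal_pos.2 hd0] : ⊥ < ENNReal.ofReal d)]
      exact fun x hx => hρd x (htE x hx)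
    rw [hdim] at h1
    exact absurd (h1.trans_lt (h2 ▸ h3)) (lt_irrefl _)
  obtain ⟨p, hpE, hp⟩ := hp
  -- Step 2: key lemma producing the next radius
  have key : ∀ (n : ℕ) (R : ℝ), 0 < R →
      ∃ r', 0 < r' ∧ r' < R ∧
        0 < μH[dn n] ((Metric.ball p R \ Metric.ball p r') ∩ E) := by
    intro n R hR
    have hcoe : ((dn n).toNNReal : ENNReal) = ENNReal.ofReal (dn n) := rfl
    have hsd : ((dn n).toNNReal : ENNReal) < dimH (Metric.ball p R ∩ E) := by
      refine lt_of_lt_of_le ?_ (hp R hR)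
      rw [hcoe]
      exact (ENNReal.ofReal_lt_ofReal_iff hd0).2 (hlt n)
    have hinf : μH[dn n] (Metric.ball p R ∩ E) = ∞ := by
      have := hausdorffMeasure_of_lt_dimH hsd
      rwa [Real.coe_toNNReal _ (hpos n).le] at this
    have hsing : μH[dn n] ({p} : Set (ℝ × ℝ)) = 0 := by
      have : dimH ({p} : Set (ℝ × ℝ)) < ((dn n).toNNReal : ENNReal) := by
        rw [dimH_singleton, hcoe]
        exact ENNReal.ofReal_pos.2 (hpos n)
      have h0 := hausdorffMeasure_of_dimH_lt this
      rwa [Real.coe_toNNReal _ (hpos n).le] at h0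
    set A : ℕ → Set (ℝ × ℝ) :=
      fun k => (Metric.ball p R \ Metric.ball p (R / (k + 2))) ∩ E with hA
    have hmonoA : Monotone A := by
      intro i j hij
      apply Set.inter_subset_inter_left
      apply Set.diff_subset_diff_right
      apply Metric.ball_subset_ball
      apply div_le_div_of_nonneg_left hR.le (by positivity)
      have : (i : ℝ) ≤ j := Nat.cast_le.2 hij
      linarith
    have hun : (⋃ k, A k) = (Metric.ball p R ∩ E) \ {p} := by
      ext x
      simp only [Set.mem_iUnion, hA, Set.mem_inter_iff, Set.mem_diff,
        Set.mem_singleton_iff, Metric.mem_ball]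
      constructor
      · rintro ⟨k, ⟨hx1, hx2⟩, hxE⟩
        refine ⟨⟨hx1, hxE⟩, ?_⟩
        rintro rfl
        exact hx2 (by simpa using by positivity : dist x x < R / (k + 2))
      · rintro ⟨⟨hx1, hxE⟩, hxp⟩
        have hd' : 0 < dist x p := dist_pos.2 hxp
        obtain ⟨k, hk⟩ := exists_nat_ge (R / dist x p)
        refine ⟨k, ⟨hx1, ?_⟩, hxE⟩
        intro hlt'
        have h1 : R / dist x p ≤ (k : ℝ) + 2 := by linarith
        have h2 : R ≤ ((k : ℝ) + 2) * dist x p := by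
          rwa [div_le_iff₀ hd'] at h1
        have h3 : R / ((k : ℝ) + 2) ≤ dist x p := by
          rw [div_le_iff₀ (by positivity)]
          linarith [mul_comm ((k : ℝ) + 2) (dist x p)]
        exact absurd hlt' (not_lt.2 h3)
    have hμ : μH[dn n] ((Metric.ball p R ∩ E) \ {p}) = ∞ := by
      rw [measure_diff_null hsing, hinf]
    rw [← hun, hmonoA.measure_iUnion] at hμ
    obtain ⟨k, hk⟩ : ∃ k, 0 < μH[dn n] (A k) := by
      by_contra hc
      push_neg at hc
      simp only [nonpos_iff_eq_zero] at hc
      simp [hc] at hμ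
    refine ⟨R / (k + 2), by positivity, ?_, ?_⟩
    · refine div_lt_self hR ?_
      have : (0:ℝ) ≤ k := Nat.cast_nonneg k
      linarith
    · exact hk
  choose f hf1 hf2 hf3 using key
  let g : ℕ → {x : ℝ // 0 < x} := fun n =>
    Nat.rec ⟨1, one_pos⟩ (fun n x => ⟨f n x.1 x.2, hf1 n x.1 x.2⟩) n
  have hg : ∀ n, (g (n + 1)).1 = f n (g n).1 (g n).2 := fun n => rfl
  refine ⟨p, hpE, fun n => (g n).1, fun n => (g n).2, ?_, ?_⟩
  · intro n
    show openSquare p (g (n + 1)).1 ⊆ openSquare p (g n).1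
    rw [hsq, hsq]
    exact Metric.ball_subset_ball (by rw [hg n]; exact (hf2 n (g n).1 (g n).2).le)
  · intro n
    show 0 < μH[dn n] ((openSquare p (g n).1 \ openSquare p (g (n + 1)).1) ∩ E)
    rw [hsq, hsq, hg n]
    exact hf3 n (g n).1 (g n).2
end

section
/- Suppose removability is a local property in the following sense: a compact set E ⊆ Ĉ is conformally removable if and only if for every open set U ⊇ E, every homeomorphism f: U → f(U) that is conformal on U \ E is conformal on U. Let G = ⋃_n G_n ∪ {p} be a compact set where the G_n are pairwise disjoint compact conformally removable sets admitting pairwise disjoint open neighborhoods U_n, and p ∉ ⋃_n U_n accumulates the G_n. Then G is conformally removable. -/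
open OnePoint in
open scoped Classical in
/-- Chart coordinate on the Riemann sphere `Ĉ = OnePoint ℂ`: the chart at a finite
point is the identity, the chart at `∞` is `z ↦ 1/z` (sending `∞` to `0`). -/
noncomputable def sphCoord (c : OnePoint ℂ) (z : OnePoint ℂ) : ℂ :=
  if c = ∞ then Option.elim z 0 (fun x => x⁻¹) else Option.elim z 0 id

open OnePoint in
open scoped Classical in
/-- Inverse chart at `c`: at a finite point it is the inclusion `ℂ → Ĉ`, at `∞`
it is `z ↦ 1/z` (sending `0` to `∞`). -/
noncomputable def sphCoordInv (c : OnePoint ℂ) (z : ℂ) : OnePoint ℂ :=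
  if c = ∞ then (if z = 0 then ∞ else ((z⁻¹ : ℂ) : OnePoint ℂ)) else (z : OnePoint ℂ)

/-- The coordinate of a point in its own chart. -/
noncomputable def sphVal (c : OnePoint ℂ) : ℂ := sphCoord c c

/-- A map of the Riemann sphere is holomorphic (conformal) at a point `a` if it is
continuous at `a` and, read in the charts at `a` and `f a`, is analytic. -/
def SphHolomorphicAt (f : OnePoint ℂ → OnePoint ℂ) (a : OnePoint ℂ) : Prop :=
  ContinuousAt f a ∧
    AnalyticAt ℂ (fun z : ℂ => sphCoord (f a) (f (sphCoordInv a z))) (sphVal a)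

/-- A compact set `E ⊆ Ĉ` is conformally removable if every homeomorphism of the
Riemann sphere that is conformal (holomorphic and injective) off `E` is conformal
everywhere (equivalently, is a Möbius transformation). -/
def ConformallyRemovable (E : Set (OnePoint ℂ)) : Prop :=
  ∀ f : OnePoint ℂ ≃ₜ OnePoint ℂ,
    (∀ z ∉ E, SphHolomorphicAt f z) → ∀ z : OnePoint ℂ, SphHolomorphicAt f z

/-!
By locality, each `G n` is removable inside its own neighbourhood `U n`. As the `U n` are
disjoint and avoid `p`, a map conformal off `G` on an open set `U ⊇ G` is then conformal on
`U \ {p}`, and since it is continuous at `p`, Riemann's removable singularity theorem (read in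
charts of `Ĉ`) makes it conformal at `p` too. Locality turns this back into removability of `G`.
-/

open OnePoint Set Filter Topology Function

section Charts

lemma sphCoord_coe_of_ne_infty {c : OnePoint ℂ} (hc : c ≠ ∞) (x : ℂ) : sphCoord c x = x := by
  simp only [sphCoord, if_neg hc]; rfl

lemma sphCoord_infty_coe (x : ℂ) : sphCoord ∞ x = x⁻¹ := by
  simp only [sphCoord]; rfl

lemma sphCoord_eq_of_ne_infty {c d : OnePoint ℂ} (hc : c ≠ ∞) (hd : d ≠ ∞) :
    sphCoord c = sphCoord d := by
  funext w; simp only [sphCoord, if_neg hc, if_neg hd]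

lemma sphCoord_infty_eq_inv {d : OnePoint ℂ} (hd : d ≠ ∞) (w : OnePoint ℂ) :
    sphCoord ∞ w = (sphCoord d w)⁻¹ := by
  induction w using OnePoint.rec with
  | infty => simp only [sphCoord, if_neg hd]; exact (inv_zero (G₀ := ℂ)).symm
  | coe x => rw [sphCoord_infty_coe, sphCoord_coe_of_ne_infty hd]

lemma sphVal_coe (x : ℂ) : sphVal x = x :=
  sphCoord_coe_of_ne_infty (coe_ne_infty x) x

lemma sphVal_infty : sphVal ∞ = 0 := by
  simp only [sphVal, sphCoord]; rfl

lemma sphCoordInv_of_ne_infty {c : OnePoint ℂ} (hc : c ≠ ∞) :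
    sphCoordInv c = ((↑) : ℂ → OnePoint ℂ) := by
  funext z; simp [sphCoordInv, hc]

lemma sphCoordInv_infty_of_ne_zero {z : ℂ} (hz : z ≠ 0) : sphCoordInv ∞ z = ↑z⁻¹ := by
  simp [sphCoordInv, hz]

lemma sphCoordInv_sphVal (a : OnePoint ℂ) : sphCoordInv a (sphVal a) = a := by
  induction a using OnePoint.rec with
  | infty => simp [sphVal_infty, sphCoordInv]
  | coe x => rw [sphVal_coe, sphCoordInv_of_ne_infty (coe_ne_infty x)]

lemma sphCoordInv_ne_self {p : OnePoint ℂ} {z : ℂ} (hz : z ≠ sphVal p) : sphCoordInv p z ≠ p := by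
  induction p using OnePoint.rec with
  | infty =>
    rw [sphVal_infty] at hz
    simp [sphCoordInv_infty_of_ne_zero hz]
  | coe x =>
    rw [sphVal_coe] at hz
    simpa [sphCoordInv_of_ne_infty (coe_ne_infty x)] using hz

lemma continuousAt_sphCoordInv_sphVal (p : OnePoint ℂ) :
    ContinuousAt (sphCoordInv p) (sphVal p) := by
  induction p using OnePoint.rec with
  | infty =>
    have h0 : sphCoordInv ∞ 0 = ∞ := by simp [sphCoordInv]
    rw [ContinuousAt, sphVal_infty, h0, ← nhdsNE_sup_pure]
    refine Tendsto.sup ?_ (by simpa [h0] using tendsto_pure_nhds (sphCoordInv ∞) 0)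
    have hinv : Tendsto (fun z : ℂ => ((z⁻¹ : ℂ) : OnePoint ℂ)) (𝓝[≠] 0) (𝓝 ∞) := by
      refine tendsto_coe_infty.comp ?_
      rw [coclosedCompact_eq_cocompact, ← Metric.cobounded_eq_cocompact]
      exact tendsto_inv₀_nhdsNE_zero
    refine hinv.congr' ?_
    filter_upwards [self_mem_nhdsWithin] with z hz
    exact (sphCoordInv_infty_of_ne_zero hz).symm
  | coe x =>
    rw [sphVal_coe, sphCoordInv_of_ne_infty (coe_ne_infty x)]
    exact continuous_coe.continuousAt

lemma tendsto_sphCoordInv_nhdsNE (p : OnePoint ℂ) :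
    Tendsto (sphCoordInv p) (𝓝[≠] (sphVal p)) (𝓝[≠] p) := by
  refine tendsto_nhdsWithin_iff.2 ⟨?_, ?_⟩
  · simpa [sphCoordInv_sphVal] using
      (continuousAt_sphCoordInv_sphVal p).tendsto.mono_left nhdsWithin_le_nhds
  · filter_upwards [self_mem_nhdsWithin] with z hz
    exact sphCoordInv_ne_self hz

lemma continuousAt_sphCoord_self (c : OnePoint ℂ) : ContinuousAt (sphCoord c) c := by
  induction c using OnePoint.rec with
  | infty =>
    refine continuousAt_infty'.2 ?_
    have : sphCoord ∞ ∘ ((↑) : ℂ → OnePoint ℂ) = fun x => x⁻¹ := funext sphCoord_infty_coe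
    rw [this, show sphCoord ∞ ∞ = 0 from sphVal_infty, coclosedCompact_eq_cocompact,
      ← Metric.cobounded_eq_cocompact]
    exact tendsto_inv₀_cobounded
  | coe x =>
    refine continuousAt_coe.2 ?_
    have : sphCoord x ∘ ((↑) : ℂ → OnePoint ℂ) = id :=
      funext (sphCoord_coe_of_ne_infty (coe_ne_infty x))
    rw [this]
    exact continuousAt_id

end Charts

section Holomorphy

open scoped Classical in
/-- The one point of `Ĉ` missed by the chart at `c`. -/
noncomputable def sphPole (c : OnePoint ℂ) : OnePoint ℂ :=
  if c = ∞ then ((0 : ℂ) : OnePoint ℂ) else ∞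

lemma sphPole_ne_self (c : OnePoint ℂ) : sphPole c ≠ c := by
  by_cases hc : c = ∞
  · simp [sphPole, hc]
  · simpa [sphPole, hc] using Ne.symm hc

lemma analyticAt_sphCoord_comp_of_ne_sphPole {h : ℂ → OnePoint ℂ} {x : ℂ} {c : OnePoint ℂ}
    (hx : h x ≠ sphPole c) (ha : AnalyticAt ℂ (fun z => sphCoord (h x) (h z)) x) :
    AnalyticAt ℂ (fun z => sphCoord c (h z)) x := by
  by_cases hc : c = ∞
  · by_cases hhx : h x = ∞
    · rwa [hc, ← hhx]
    obtain ⟨y, hy⟩ := ne_infty_iff_exists.1 hhx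
    have hy0 : y ≠ 0 := by rintro rfl; simp [sphPole, hc, ← hy] at hx
    simp only [hc, sphCoord_infty_eq_inv hhx]
    refine ha.inv ?_
    rwa [← hy, sphCoord_coe_of_ne_infty (coe_ne_infty y)]
  · have hhx : h x ≠ ∞ := by simpa [sphPole, hc] using hx
    rwa [sphCoord_eq_of_ne_infty hc hhx]

lemma analyticAt_comp_sphCoordInv {F : OnePoint ℂ → ℂ} {p : OnePoint ℂ} {z : ℂ}
    (hz : z ≠ sphVal p)
    (hF : AnalyticAt ℂ (F ∘ sphCoordInv (sphCoordInv p z)) (sphVal (sphCoordInv p z))) :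
    AnalyticAt ℂ (F ∘ sphCoordInv p) z := by
  induction p using OnePoint.rec with
  | infty =>
    rw [sphVal_infty] at hz
    rw [sphCoordInv_infty_of_ne_zero hz, sphVal_coe,
      sphCoordInv_of_ne_infty (coe_ne_infty _)] at hF
    refine (hF.comp (analyticAt_inv hz)).congr ?_
    filter_upwards [isOpen_ne.mem_nhds hz] with w hw
    simp [sphCoordInv_infty_of_ne_zero hw]
  | coe x =>
    rw [sphCoordInv_of_ne_infty (coe_ne_infty x)] at hF ⊢
    rwa [sphVal_coe, sphCoordInv_of_ne_infty (coe_ne_infty z)] at hF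

theorem sphHolomorphicAt_of_punctured_nhds_of_continuousAt {f : OnePoint ℂ → OnePoint ℂ}
    {p : OnePoint ℂ} (hf : ∀ᶠ a in 𝓝[≠] p, SphHolomorphicAt f a) (hcont : ContinuousAt f p) :
    SphHolomorphicAt f p := by
  refine ⟨hcont, ?_⟩
  -- near `p`, `f` stays in the domain of the chart at `f p`
  have hnear : ∀ᶠ a in 𝓝[≠] p, f a ≠ sphPole (f p) :=
    (hcont.eventually (isOpen_ne.mem_nhds (sphPole_ne_self (f p)).symm)).filter_mono
      nhdsWithin_le_nhds
  refine Complex.analyticAt_of_differentiable_on_punctured_nhds_of_continuousAt ?_ ?_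
  · filter_upwards [(tendsto_sphCoordInv_nhdsNE p).eventually (hf.and hnear),
      self_mem_nhdsWithin] with z ⟨⟨_, ha⟩, hfa⟩ hz
    set a := sphCoordInv p z
    rw [← sphCoordInv_sphVal a] at hfa
    exact (analyticAt_comp_sphCoordInv (F := fun w => sphCoord (f p) (f w)) hz
      (analyticAt_sphCoord_comp_of_ne_sphPole hfa (by rwa [sphCoordInv_sphVal]))).differentiableAt
  · have hfι : ContinuousAt (f ∘ sphCoordInv p) (sphVal p) :=
      ContinuousAt.comp (by rwa [sphCoordInv_sphVal]) (continuousAt_sphCoordInv_sphVal p)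
    have hchart : ContinuousAt (sphCoord (f p)) ((f ∘ sphCoordInv p) (sphVal p)) := by
      simpa only [Function.comp_apply, sphCoordInv_sphVal] using continuousAt_sphCoord_self (f p)
    exact hchart.comp hfι

end Holomorphy

lemma Topology.IsOpenEmbedding.domRestrict_of_subset {X Y : Type*} [TopologicalSpace X]
    [TopologicalSpace Y] {f : X → Y} {U W : Set X} (hf : IsOpenEmbedding (U.domRestrict f))
    (hW : IsOpen W) (hWU : W ⊆ U) : IsOpenEmbedding (W.domRestrict f) :=
  hf.comp (.inclusion hWU (hW.preimage continuous_subtype_val))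

/-- The right-hand side of the locality characterization of conformal removability. -/
def LocallyRemovable (E : Set (OnePoint ℂ)) : Prop :=
  ∀ U : Set (OnePoint ℂ), IsOpen U → E ⊆ U →
    ∀ f : OnePoint ℂ → OnePoint ℂ, IsOpenEmbedding (U.domRestrict f) →
      (∀ z ∈ U \ E, SphHolomorphicAt f z) → ∀ z ∈ U, SphHolomorphicAt f z

lemma locallyRemovable_singleton (p : OnePoint ℂ) : LocallyRemovable {p} := by
  intro U hU hpU f hf hhol z hz
  by_cases hzp : z = p
  · subst hzp
    have hcont : ContinuousAt f z :=
      (continuousOn_iff_continuous_domRestrict.2 hf.continuous).continuousAt (hU.mem_nhds hz)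
    refine sphHolomorphicAt_of_punctured_nhds_of_continuousAt ?_ hcont
    filter_upwards [inter_mem_nhdsWithin {z}ᶜ (hU.mem_nhds hz)] with a ⟨haz, haU⟩
    exact hhol a ⟨haU, haz⟩
  · exact hhol z ⟨hz, hzp⟩

lemma LocallyRemovable.union {E F : Set (OnePoint ℂ)} (hE : LocallyRemovable E)
    (hF : LocallyRemovable F) (hFc : IsClosed F) (hEF : Disjoint E F) :
    LocallyRemovable (E ∪ F) := by
  intro U hU hEFU f hf hhol
  have hUF : IsOpen (U \ F) := hU.sdiff hFc
  have hholF : ∀ z ∈ U \ F, SphHolomorphicAt f z :=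
    hE (U \ F) hUF (fun z hz => ⟨hEFU (.inl hz), hEF.notMem_of_mem_left hz⟩) f
      (hf.domRestrict_of_subset hUF sdiff_subset)
      (fun z ⟨⟨hzU, hzF⟩, hzE⟩ => hhol z ⟨hzU, by rintro (hz | hz) <;> contradiction⟩)
  exact hF U hU (subset_union_right.trans hEFU) f hf hholF

lemma locallyRemovable_iUnion {ι : Type*} {G U : ι → Set (OnePoint ℂ)}
    (hG : ∀ i, LocallyRemovable (G i)) (hU : ∀ i, IsOpen (U i)) (hGU : ∀ i, G i ⊆ U i)
    (hUdisj : Pairwise (Disjoint on U)) : LocallyRemovable (⋃ i, G i) := by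
  intro W hW hGW f hf hhol z hzW
  by_cases hzG : z ∈ ⋃ i, G i
  · obtain ⟨i, hzi⟩ := mem_iUnion.1 hzG
    have hWUi : IsOpen (W ∩ U i) := hW.inter (hU i)
    refine hG i (W ∩ U i) hWUi (subset_inter ((subset_iUnion G i).trans hGW) (hGU i)) f
      (hf.domRestrict_of_subset hWUi inter_subset_left) ?_ z ⟨hzW, hGU i hzi⟩
    rintro a ⟨⟨haW, haUi⟩, haGi⟩
    refine hhol a ⟨haW, fun haG => ?_⟩
    obtain ⟨j, haj⟩ := mem_iUnion.1 haG
    obtain rfl | hij := eq_or_ne i j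
    · exact haGi haj
    · exact (hUdisj hij).notMem_of_mem_right (hGU j haj) haUi
  · exact hhol z ⟨hzW, hzG⟩

theorem union_accumulating_removable_sets_removable_general
    (hloc : ∀ E : Set (OnePoint ℂ), IsCompact E →
      (ConformallyRemovable E ↔
        ∀ U : Set (OnePoint ℂ), IsOpen U → E ⊆ U →
          ∀ f : OnePoint ℂ → OnePoint ℂ, Topology.IsOpenEmbedding (U.restrict f) →
            (∀ z ∈ U \ E, SphHolomorphicAt f z) → ∀ z ∈ U, SphHolomorphicAt f z))
    (G : ℕ → Set (OnePoint ℂ)) (hGc : ∀ n, IsCompact (G n))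
    (hGrem : ∀ n, ConformallyRemovable (G n))
    (U : ℕ → Set (OnePoint ℂ)) (hUopen : ∀ n, IsOpen (U n))
    (hGU : ∀ n, G n ⊆ U n)
    (hUdisj : ∀ m n, m ≠ n → Disjoint (U m) (U n))
    (p : OnePoint ℂ) (hpU : p ∉ ⋃ n, U n)
    (hGcompact : IsCompact ((⋃ n, G n) ∪ {p})) :
    ConformallyRemovable ((⋃ n, G n) ∪ {p}) := by
  have hG : ∀ n, LocallyRemovable (G n) := fun n => (hloc (G n) (hGc n)).1 (hGrem n)
  have hp : Disjoint (⋃ n, G n) {p} :=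
    disjoint_singleton_right.2 fun hpG => hpU (iUnion_mono hGU hpG)
  exact (hloc _ hGcompact).2 <| (locallyRemovable_iUnion hG hUopen hGU hUdisj).union
    (locallyRemovable_singleton p) isClosed_singleton hp

/-- Assuming the locality characterization of conformal removability (Younsi), a
compact set `G = (⋃ n, G n) ∪ {p}` formed from pairwise disjoint compact removable
sets `G n` with pairwise disjoint open neighborhoods `U n` avoiding the accumulation
point `p` is conformally removable. -/
theorem union_accumulating_removable_sets_removable
    (hloc : ∀ E : Set (OnePoint ℂ), IsCompact E →
      (ConformallyRemovable E ↔
        ∀ U : Set (OnePoint ℂ), IsOpen U → E ⊆ U →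
          ∀ f : OnePoint ℂ → OnePoint ℂ, Topology.IsOpenEmbedding (U.restrict f) →
            (∀ z ∈ U \ E, SphHolomorphicAt f z) → ∀ z ∈ U, SphHolomorphicAt f z))
    (G : ℕ → Set (OnePoint ℂ)) (hGc : ∀ n, IsCompact (G n))
    (hGrem : ∀ n, ConformallyRemovable (G n))
    (hGdisj : ∀ m n, m ≠ n → Disjoint (G m) (G n))
    (U : ℕ → Set (OnePoint ℂ)) (hUopen : ∀ n, IsOpen (U n))
    (hGU : ∀ n, G n ⊆ U n)
    (hUdisj : ∀ m n, m ≠ n → Disjoint (U m) (U n))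
    (p : OnePoint ℂ) (hpU : p ∉ ⋃ n, U n) (hpacc : p ∈ closure (⋃ n, G n))
    (hGcompact : IsCompact ((⋃ n, G n) ∪ {p})) :
    ConformallyRemovable ((⋃ n, G n) ∪ {p}) :=
  union_accumulating_removable_sets_removable_general hloc G hGc hGrem U hUopen hGU hUdisj p hpU
    hGcompact
end
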